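/- arXiv:0908.1355 — 4 statements merged into one kernel-verified Lean document; each statement's English description precedes it below -/
import Mathlib

section
/- The Dirichlet series sum over (e1,...,e5) in N_0^5 satisfying e4 ≤ e3, e5 ≤ e3, and e5 ≤ e4 ≤ e5 + e1, of p^(-s(e1 + 2*e2 + 3*e3)), equals 1/((1-p^-s)(1-p^-2s)(1-p^-3s)^2(1-p^-4s)). Formally, for real t with 0 < t < 1 (substituting t = p^-s), the sum over (e1,...,e5) ∈ ℕ^5 with e4 ≤ e3, e5 ≤ e3, e5 ≤ e4 ≤ e5 + e1 of t^(e1 + 2e2 + 3e3) equals 1/((1-t)(1-t^2)(1-t^3)^2(1-t^4)). -/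
/-!
Writing `e = (e₁, …, e₅)`, the differences `e₄ - e₅`, `e₃ - e₄` and `e₁ - (e₄ - e₅)` are
arbitrary natural numbers, as are `e₂` and `e₅`, so the constraint region is a copy of `ℕ⁵`.
In these coordinates the exponent `e₁ + 2e₂ + 3e₃` has weights `1, 2, 3, 3, 4`, and the series
factors into five geometric series.
-/

/-- The constraint region parametrised by `(c, d, b, f, a)`, where
`a = e₄ - e₅`, `b = e₃ - e₄`, `c = e₁ - a`, `d = e₂`, `f = e₅` (indices shifted by one in `e`). -/
def admissibleTupleEquiv : (ℕ × ℕ × ℕ × ℕ × ℕ) ≃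
    {e : Fin 5 → ℕ // e 3 ≤ e 2 ∧ e 4 ≤ e 2 ∧ e 4 ≤ e 3 ∧ e 3 ≤ e 4 + e 0} where
  toFun := fun (c, d, b, f, a) => ⟨![a + c, d, f + a + b, f + a, f], by simp; omega⟩
  invFun e := (e.1 0 - (e.1 3 - e.1 4), e.1 1, e.1 2 - e.1 3, e.1 4, e.1 3 - e.1 4)
  left_inv := fun (c, d, b, f, a) => by simp
  right_inv := fun ⟨e, he⟩ => by
    ext i
    fin_cases i <;> simp <;> omega

lemma admissibleTupleEquiv_exponent (c d b f a : ℕ) :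
    (admissibleTupleEquiv (c, d, b, f, a)).1 0 + 2 * (admissibleTupleEquiv (c, d, b, f, a)).1 1 +
      3 * (admissibleTupleEquiv (c, d, b, f, a)).1 2 = c + 2 * d + 3 * b + 3 * f + 4 * a := by
  simp only [admissibleTupleEquiv, Equiv.coe_fn_mk, Matrix.cons_val]
  ring

lemma HasSum.geometric_mul {ι : Type*} {f : ι → ℝ} {s r : ℝ} (hf : HasSum f s)
    (hf0 : ∀ i, 0 ≤ f i) (hr0 : 0 ≤ r) (hr1 : r < 1) :
    HasSum (fun p : ℕ × ι => r ^ p.1 * f p.2) ((1 - r)⁻¹ * s) :=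
  (hasSum_geometric_of_lt_one hr0 hr1).mul hf <|
    (summable_geometric_of_lt_one hr0 hr1).mul_of_nonneg hf.summable
      (fun n => pow_nonneg hr0 n) hf0

/-- the Dirichlet series summed over tuples (e1,...,e5) ∈ ℕ₀^5 with
e4 ≤ e3, e5 ≤ e3, e5 ≤ e4 ≤ e5 + e1, of t^(e1 + 2e2 + 3e3), for t = p^{-s} with
0 < t < 1, equals 1/((1-t)(1-t^2)(1-t^3)^2(1-t^4)).  (Here e = (e 0, ..., e 4)
stands for (e1,...,e5).) -/
theorem stmt_0 (t : ℝ) (ht0 : 0 < t) (ht1 : t < 1) :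
    ∑' e : {e : Fin 5 → ℕ // e 3 ≤ e 2 ∧ e 4 ≤ e 2 ∧ e 4 ≤ e 3 ∧ e 3 ≤ e 4 + e 0},
      t ^ (e.1 0 + 2 * e.1 1 + 3 * e.1 2)
    = 1 / ((1 - t) * (1 - t ^ 2) * (1 - t ^ 3) ^ 2 * (1 - t ^ 4)) := by
  have hpow_nonneg (k : ℕ) : 0 ≤ t ^ k := pow_nonneg ht0.le k
  have hpow_lt_one {k : ℕ} (hk : k ≠ 0) : t ^ k < 1 := pow_lt_one₀ ht0.le ht1 hk
  have hfactored :=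
    ((((hasSum_geometric_of_lt_one (hpow_nonneg 4) (hpow_lt_one four_ne_zero)).geometric_mul
      (fun _ => by positivity) (hpow_nonneg 3) (hpow_lt_one three_ne_zero)).geometric_mul
      (fun _ => by positivity) (hpow_nonneg 3) (hpow_lt_one three_ne_zero)).geometric_mul
      (fun _ => by positivity) (hpow_nonneg 2) (hpow_lt_one two_ne_zero)).geometric_mul
      (fun _ => by positivity) ht0.le ht1
  rw [← admissibleTupleEquiv.tsum_eq]
  convert hfactored.tsum_eq using 1
  · exact tsum_congr fun ⟨c, d, b, f, a⟩ => by rw [admissibleTupleEquiv_exponent]; ring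
  · have h1 : 1 - t ≠ 0 := (sub_pos.2 ht1).ne'
    have h2 : 1 - t ^ 2 ≠ 0 := (sub_pos.2 (hpow_lt_one two_ne_zero)).ne'
    have h3 : 1 - t ^ 3 ≠ 0 := (sub_pos.2 (hpow_lt_one three_ne_zero)).ne'
    have h4 : 1 - t ^ 4 ≠ 0 := (sub_pos.2 (hpow_lt_one four_ne_zero)).ne'
    field_simp
end

section
/- For a prime p, an upper triangular matrix M over Z_p with diagonal entries p^{n1}, p^{n2}, p^{n3}, entry a12 in position (1,2), a13 in position (1,3), a23 in position (2,3), and zeros below the diagonal, has rows spanning an ideal (not just a subalgebra) of the Heisenberg Lie Z_p-algebra L_p (with basis x, y, z, bracket [x,y] = z, z central) if and only if n3 ≤ n1, n3 ≤ n2, and n3 ≤ v_p(a12), where v_p denotes the p-adic valuation. -/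
/-- The Lie bracket of the Heisenberg Lie algebra over `ℤ_[p]` in the basis
(x, y, z) with [x,y] = z and z central, in coordinates. -/
noncomputable def hbr {p : ℕ} [Fact p.Prime] (u v : Fin 3 → ℤ_[p]) : Fin 3 → ℤ_[p] :=
  fun i => if i = 2 then u 0 * v 1 - u 1 * v 0 else 0

/-- an upper triangular matrix with diagonal p^{n1}, p^{n2}, p^{n3}
has rows spanning an ideal of the Heisenberg Lie ℤ_[p]-algebra iff
n3 ≤ n1, n3 ≤ n2 and n3 ≤ v_p(a12) (i.e. p^{n3} ∣ a12). -/
theorem stmt_2 (p : ℕ) [Fact p.Prime] (n1 n2 n3 : ℕ) (a12 a13 a23 : ℤ_[p])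
    (M : Matrix (Fin 3) (Fin 3) ℤ_[p])
    (hM : M = !![(p : ℤ_[p]) ^ n1, a12, a13; 0, (p : ℤ_[p]) ^ n2, a23;
                 0, 0, (p : ℤ_[p]) ^ n3]) :
    (∀ u v : Fin 3 → ℤ_[p],
        v ∈ Submodule.span ℤ_[p] (Set.range fun i => M i) →
        hbr u v ∈ Submodule.span ℤ_[p] (Set.range fun i => M i))
    ↔ (n3 ≤ n1 ∧ n3 ≤ n2 ∧ (p : ℤ_[p]) ^ n3 ∣ a12) := by
  have hprime : Prime ((p : ℤ_[p])) := PadicInt.prime_p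
  have hp0 : ((p : ℤ_[p])) ≠ 0 := hprime.ne_zero
  have hpu : ¬ IsUnit ((p : ℤ_[p])) := hprime.not_unit
  have hn10 : ((p : ℤ_[p]) ^ n1) ≠ 0 := pow_ne_zero _ hp0
  have hn20 : ((p : ℤ_[p]) ^ n2) ≠ 0 := pow_ne_zero _ hp0
  set S := Submodule.span ℤ_[p] (Set.range fun i => M i) with hS
  have hmem : ∀ i, M i ∈ S := fun i => Submodule.subset_span ⟨i, rfl⟩
  -- key characterization of elements supported on the last coordinate
  have key : ∀ t : ℤ_[p],
      ((fun i => if i = 2 then t else (0:ℤ_[p])) ∈ S) ↔ (p : ℤ_[p]) ^ n3 ∣ t := by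
    intro t
    constructor
    · intro ht
      rw [hS, Submodule.mem_span_range_iff_exists_fun] at ht
      obtain ⟨c, hc⟩ := ht
      have h0 := congrFun hc 0
      have h1 := congrFun hc 1
      have h2 := congrFun hc 2
      simp [Fin.sum_univ_three, hM, Matrix.vecHead, Matrix.vecTail] at h0 h1 h2
      have hpne : p ≠ 0 := (Fact.out (p := p.Prime)).ne_zero
      have hc0 : c 0 = 0 := by tauto
      rw [hc0] at h1
      simp at h1
      have hc1 : c 1 = 0 := by tauto
      rw [hc0, hc1] at h2
      simp at h2
      exact ⟨c 2, by rw [← h2]; ring⟩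
    · rintro ⟨s, rfl⟩
      have heq : (fun i => if i = 2 then (p : ℤ_[p]) ^ n3 * s else (0:ℤ_[p])) = s • M 2 := by
        funext i
        fin_cases i <;> simp [hM, Matrix.vecHead, Matrix.vecTail, mul_comm]
      rw [heq]
      exact Submodule.smul_mem _ _ (hmem 2)
  constructor
  · intro H
    have hv0 : ∀ v ∈ S, (p : ℤ_[p]) ^ n3 ∣ v 0 := by
      intro v hv
      have h := H ![0, 1, 0] v hv
      rw [show hbr ![0, 1, 0] v = fun i => if i = 2 then (0 * v 1 - 1 * v 0) else 0 by
        funext i; simp [hbr]] at h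
      have := (key _).mp h
      have : (p : ℤ_[p]) ^ n3 ∣ -(v 0) := by simpa using this
      simpa using this.neg_right
    have hv1 : ∀ v ∈ S, (p : ℤ_[p]) ^ n3 ∣ v 1 := by
      intro v hv
      have h := H ![1, 0, 0] v hv
      rw [show hbr ![1, 0, 0] v = fun i => if i = 2 then (1 * v 1 - 0 * v 0) else 0 by
        funext i; simp [hbr]] at h
      have := (key _).mp h
      simpa using this
    have d1 : (p : ℤ_[p]) ^ n3 ∣ (p : ℤ_[p]) ^ n1 := by
      have := hv0 (M 0) (hmem 0)
      simpa [hM] using this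
    have d2 : (p : ℤ_[p]) ^ n3 ∣ (p : ℤ_[p]) ^ n2 := by
      have := hv1 (M 1) (hmem 1)
      simpa [hM] using this
    have d12 : (p : ℤ_[p]) ^ n3 ∣ a12 := by
      have := hv1 (M 0) (hmem 0)
      simpa [hM] using this
    exact ⟨(pow_dvd_pow_iff hp0 hpu).mp d1, (pow_dvd_pow_iff hp0 hpu).mp d2, d12⟩
  · rintro ⟨h1, h2, h12⟩ u v hv
    rw [hS, Submodule.mem_span_range_iff_exists_fun] at hv
    obtain ⟨c, hc⟩ := hv
    have h0 := congrFun hc 0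
    have h1' := congrFun hc 1
    simp [Fin.sum_univ_three, hM, Matrix.vecHead, Matrix.vecTail] at h0 h1'
    have dv0 : (p : ℤ_[p]) ^ n3 ∣ v 0 := by
      rw [← h0]
      exact Dvd.dvd.mul_left (pow_dvd_pow _ h1) _
    have dv1 : (p : ℤ_[p]) ^ n3 ∣ v 1 := by
      rw [← h1']
      exact dvd_add (h12.mul_left _) (Dvd.dvd.mul_left (pow_dvd_pow _ h2) _)
    exact (key _).mpr (dvd_sub (dv1.mul_left _) (dv0.mul_left _))
end

section
/- Every double coset G·M·A, where G = GL_3(Z_p), M ∈ Mat(3,Z_p) ∩ GL_3(Q_p) spans an ideal of the Heisenberg Lie algebra L_p, and A = Aut(L_p) as a matrix group, contains a matrix of the form: upper triangular with diagonal (p^{e1+e2+e3}, p^{e2+e3}, p^{e3}), (1,2)-entry 0, (1,3)-entry p^{e4}, (2,3)-entry p^{e5}, where e1,...,e5 ∈ ℕ_0 satisfy e4 ≤ e3, e5 ≤ e3, and e5 ≤ e4 ≤ e5 + e1. -/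
/-- Aut(L_p) = {(α, *; 0, det α) : α ∈ GL_2(ℤ_p)} as a set of matrices. -/
def AutSet (p : ℕ) [Fact p.Prime] : Set (Matrix (Fin 3) (Fin 3) ℤ_[p]) :=
  {B | ∃ (α : Matrix (Fin 2) (Fin 2) ℤ_[p]) (v13 v23 : ℤ_[p]), IsUnit α.det ∧
    B = !![α 0 0, α 0 1, v13; α 1 0, α 1 1, v23; 0, 0, α.det]}

/-!
An automorphism acting on the columns, followed by row reduction, brings `M` to the shape
`(d₁, 0, c₁; 0, d, c₂; 0, 0, τ)` with `d ∣ d₁`. The row span is still an ideal, and bracketing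
its second row with `x` puts `(0, 0, d)` into it, so `τ ∣ d`.

The shears `y ↦ y + σ x` and `x ↦ x + σ y` of `L_p`, followed by row operations, add to `c₂`
any combination of `c₁` and `τ`, and to `c₁` any combination of `(d₁ / d) c₂` and `τ`. Since
divisibility in `ℤ_p` is total, `a + s b` can be made equal to whichever of `a`, `b` divides the
other; four such steps give `c₂ ∣ c₁`, `c₁ ∣ (d₁ / d) c₂` and `c₁, c₂ ∣ τ`. A diagonal
automorphism and a rescaling of the rows finally replace each entry by the power of `p` with the
same valuation, and the divisibilities become the inequalities between `e₁, …, e₅`.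
-/

open Matrix Submodule Set

section DvdTotal

variable {R : Type*} [CommRing R] [PreValuationRing R]

theorem exists_add_mul_dvd_and_dvd (x y : R) : ∃ s, x + s * y ∣ x ∧ x + s * y ∣ y := by
  rcases ValuationRing.dvd_total x y with h | ⟨r, rfl⟩
  · exact ⟨0, by simpa using h⟩
  · refine ⟨1 - r, ?_⟩
    rw [show y * r + (1 - r) * y = y by ring]
    exact ⟨dvd_mul_right y r, dvd_rfl⟩

theorem exists_reduced_corner (X τ c₁ c₂ : R) :
    ∃ s s' t t' C₁ C₂ : R, C₂ = c₂ + s * c₁ + s' * τ ∧ C₁ = c₁ + t * (X * C₂) + t' * τ ∧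
      C₁ ∣ τ ∧ C₂ ∣ τ ∧ C₂ ∣ C₁ ∧ C₁ ∣ X * C₂ := by
  obtain ⟨s, hc₂, hc₁⟩ := exists_add_mul_dvd_and_dvd c₂ c₁
  obtain ⟨s', hC₂, hC₂τ⟩ := exists_add_mul_dvd_and_dvd (c₂ + s * c₁) τ
  set C₂ := c₂ + s * c₁ + s' * τ
  obtain ⟨t, hz, hzX⟩ := exists_add_mul_dvd_and_dvd c₁ (X * C₂)
  obtain ⟨t', hC₁, hC₁τ⟩ := exists_add_mul_dvd_and_dvd (c₁ + t * (X * C₂)) τ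
  refine ⟨s, s', t, t', _, C₂, rfl, rfl, hC₁τ, hC₂τ, ?_, hC₁.trans hzX⟩
  exact dvd_add (dvd_add (hC₂.trans hc₁) (dvd_mul_of_dvd_right (dvd_mul_left _ _) _))
    (dvd_mul_of_dvd_right hC₂τ _)

theorem exists_isUnit_det_pair_reduction (x y : R) :
    ∃ α : Matrix (Fin 2) (Fin 2) R, IsUnit α.det ∧ x * α 0 0 + y * α 1 0 = 0 ∧
      x * α 0 1 + y * α 1 1 ∣ x ∧ x * α 0 1 + y * α 1 1 ∣ y := by
  rcases ValuationRing.dvd_total x y with ⟨b, rfl⟩ | ⟨a, rfl⟩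
  · exact ⟨!![-b, 1; 1, 0], by simp [det_fin_two], by simp, by simp, by simp⟩
  · exact ⟨!![1, 0; -a, 1], by simp [det_fin_two], by simp, by simp, by simp⟩

end DvdTotal

theorem IsDiscreteValuationRing.exists_dvd_forall {R ι : Type*} [CommRing R] [IsDomain R]
    [IsDiscreteValuationRing R] [Finite ι] [Nonempty ι] (f : ι → R) : ∃ i, ∀ j, f i ∣ f j := by
  obtain ⟨i, hi⟩ := Finite.exists_min fun i => addVal R (f i)
  exact ⟨i, fun j => addVal_le_iff_dvd.1 (hi j)⟩

theorem Submodule.span_range_eq_span_singleton_sup {ι R V : Type*} [Ring R] [AddCommGroup V]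
    [Module R V] (g : ι → V) (i₀ : ι) (c : ι → R) :
    span R (range g) = R ∙ g i₀ ⊔ span R (range fun i => g i - c i • g i₀) := by
  apply le_antisymm
  · refine span_le.2 (range_subset_iff.2 fun i => ?_)
    rw [← sub_add_cancel (g i) (c i • g i₀)]
    exact add_mem (mem_sup_right (subset_span ⟨i, rfl⟩))
      (mem_sup_left (smul_mem _ _ (mem_span_singleton_self _)))
  · refine sup_le (span_le.2 (singleton_subset_iff.2 (subset_span ⟨i₀, rfl⟩)))
      (span_le.2 (range_subset_iff.2 fun i => ?_))
    exact sub_mem (subset_span ⟨i, rfl⟩) (smul_mem _ _ (subset_span ⟨i₀, rfl⟩))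

namespace Matrix

theorem dvd_apply_of_mem_span_range_row {m n R : Type*} [CommRing R] {P : Matrix m n R}
    {c : R} {j : n} (hc : ∀ i, c ∣ P i j) {v : n → R} (hv : v ∈ span R (range P.row)) :
    c ∣ v j := by
  induction hv using span_induction with
  | mem x hx => obtain ⟨i, rfl⟩ := hx; exact hc i
  | zero => exact dvd_zero c
  | add x y _ _ hx hy => exact dvd_add hx hy
  | smul r x _ hx => exact dvd_mul_of_dvd_right hx r

theorem span_range_row_mul {l m n R : Type*} [Fintype m] [CommRing R] (M : Matrix l m R)
    (A : Matrix m n R) :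
    span R (range (M * A).row) = (span R (range M.row)).map A.vecMulLinear := by
  rw [map_span, ← range_comp]; rfl

theorem exists_mul_eq_of_span_range_le {m n R : Type*} [Fintype m] [CommRing R]
    {P Q : Matrix m n R} (h : span R (range Q.row) ≤ span R (range P.row)) :
    ∃ C : Matrix m m R, C * P = Q := by
  have hQ : ∀ i, Q i ∈ LinearMap.range P.vecMulLinear := fun i => by
    rw [range_vecMulLinear]; exact h (subset_span ⟨i, rfl⟩)
  choose C hC using hQ
  exact ⟨C, Matrix.ext fun i j => congrFun (hC i) j⟩

theorem exists_isUnit_det_mul_eq_of_span_range_eq {n R : Type*} [Fintype n] [DecidableEq n]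
    [CommRing R] [IsDomain R] {P Q : Matrix n n R} (hP : P.det ≠ 0)
    (h : span R (range P.row) = span R (range Q.row)) :
    ∃ γ : Matrix n n R, IsUnit γ.det ∧ γ * P = Q := by
  obtain ⟨C, hC⟩ := exists_mul_eq_of_span_range_le h.ge
  obtain ⟨C', hC'⟩ := exists_mul_eq_of_span_range_le h.le
  have h₀ : (C' * C - 1) * P = 0 := by
    rw [sub_mul, one_mul, Matrix.mul_assoc, hC, hC', sub_self]
  have hCC : C' * C = 1 :=
    sub_eq_zero.1 (funext fun i => eq_zero_of_vecMul_eq_zero hP (congrFun h₀ i))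
  exact ⟨C, isUnit_det_of_left_inverse hCC, hC⟩

def triangular {R : Type*} [Zero R] (d₁ c₁ d c₂ τ : R) : Matrix (Fin 3) (Fin 3) R :=
  !![d₁, 0, c₁; 0, d, c₂; 0, 0, τ]

namespace triangular

variable {R : Type*} [CommRing R]

theorem det (d₁ c₁ d c₂ τ : R) : (triangular d₁ c₁ d c₂ τ).det = d₁ * d * τ := by
  simp [triangular, det_fin_three]

theorem span_range_row (d₁ c₁ d c₂ τ : R) :
    span R (range (triangular d₁ c₁ d c₂ τ).row) =
      R ∙ ![d₁, 0, c₁] ⊔ (R ∙ ![0, d, c₂] ⊔ R ∙ ![0, 0, τ]) := by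
  have : (triangular d₁ c₁ d c₂ τ).row = ![![d₁, 0, c₁], ![0, d, c₂], ![0, 0, τ]] := by
    ext i j; fin_cases i <;> fin_cases j <;> rfl
  rw [this, range_cons, range_cons, range_cons, range_empty]
  simp only [span_insert, union_empty, singleton_union]

theorem dvd_of_mem_span_range_row [IsDomain R] {d₁ c₁ d c₂ τ x : R} (hd₁ : d₁ ≠ 0) (hd : d ≠ 0)
    (hx : ![0, 0, x] ∈ span R (range (triangular d₁ c₁ d c₂ τ).row)) : τ ∣ x := by
  rw [← range_vecMulLinear] at hx
  obtain ⟨w, hw⟩ := hx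
  have hcol : ∀ j, ![0, 0, x] j = ![w 0 * d₁, w 1 * d, w 0 * c₁ + w 1 * c₂ + w 2 * τ] j := by
    intro j; rw [← hw]; fin_cases j <;> simp [triangular, vecMul, dotProduct, Fin.sum_univ_three]
  have h₀ : w 0 = 0 := by simpa [hd₁] using (hcol 0).symm
  have h₁ : w 1 = 0 := by simpa [hd] using (hcol 1).symm
  exact ⟨w 2, by simpa [h₀, h₁, mul_comm] using hcol 2⟩

end triangular

theorem exists_span_range_row_eq_triangular {R : Type*} [CommRing R] [IsDomain R]
    [IsDiscreteValuationRing R] (P : Matrix (Fin 3) (Fin 3) R) {i₀ : Fin 3} (h₀ : P i₀ 0 = 0)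
    (hdvd : ∀ i, P i₀ 1 ∣ P i 1) :
    ∃ d₁ c₁ τ : R, span R (range P.row) =
      span R (range (triangular d₁ c₁ (P i₀ 1) (P i₀ 2) τ).row) := by
  choose q hq using hdvd
  set k : Fin 3 → Fin 3 → R := fun i => P i - q i • P i₀
  have hk₁ : ∀ i, k i 1 = 0 := fun i => by
    simp only [k, Pi.sub_apply, Pi.smul_apply, smul_eq_mul, hq i]; ring
  obtain ⟨i₁, hi₁⟩ := IsDiscreteValuationRing.exists_dvd_forall fun i => k i 0
  choose q' hq' using hi₁
  set t : Fin 3 → Fin 3 → R := fun i => k i - q' i • k i₁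
  have ht₀ : ∀ i, t i 0 = 0 := fun i => by
    simp only [t, Pi.sub_apply, Pi.smul_apply, smul_eq_mul, hq' i]; ring
  have ht₁ : ∀ i, t i 1 = 0 := fun i => by simp [t, hk₁]
  obtain ⟨i₂, hi₂⟩ := IsDiscreteValuationRing.exists_dvd_forall fun i => t i 2
  choose q'' hq'' using hi₂
  have hr : (fun i => t i - q'' i • t i₂) = 0 := by
    funext i j
    fin_cases j <;> simp [ht₀, ht₁, hq'' i]; ring
  have hP₀ : P i₀ = ![0, P i₀ 1, P i₀ 2] := by funext j; fin_cases j <;> simp [h₀]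
  have hk₀ : k i₁ = ![k i₁ 0, 0, k i₁ 2] := by funext j; fin_cases j <;> simp [hk₁]
  have ht₂ : t i₂ = ![0, 0, t i₂ 2] := by funext j; fin_cases j <;> simp [ht₀, ht₁]
  refine ⟨k i₁ 0, k i₁ 2, t i₂ 2, ?_⟩
  rw [show P.row = fun i => P i from rfl, span_range_eq_span_singleton_sup _ i₀ q,
    span_range_eq_span_singleton_sup k i₁ q', span_range_eq_span_singleton_sup t i₂ q'', hr,
    triangular.span_range_row, ← hP₀, ← hk₀, ← ht₂, Pi.zero_def, range_const,
    span_singleton_eq_bot.2 rfl, sup_bot_eq, sup_left_comm]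

end Matrix

section Heisenberg

variable {p : ℕ} [Fact p.Prime]

theorem PadicInt.valuation_le_of_dvd {x y : ℤ_[p]} (hy : y ≠ 0) (h : x ∣ y) :
    x.valuation ≤ y.valuation := by
  obtain ⟨z, rfl⟩ := h
  rw [PadicInt.valuation_mul (left_ne_zero_of_mul hy) (right_ne_zero_of_mul hy)]
  exact Nat.le_add_right _ _

namespace AutSet

theorem mul_mem {A B : Matrix (Fin 3) (Fin 3) ℤ_[p]} (hA : A ∈ AutSet p) (hB : B ∈ AutSet p) :
    A * B ∈ AutSet p := by
  obtain ⟨α, v₁, v₂, hα, rfl⟩ := hA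
  obtain ⟨β, w₁, w₂, hβ, rfl⟩ := hB
  refine ⟨α * β, α 0 0 * w₁ + α 0 1 * w₂ + v₁ * β.det, α 1 0 * w₁ + α 1 1 * w₂ + v₂ * β.det,
    by rw [det_mul]; exact hα.mul hβ, ?_⟩
  rw [mul_fin_three, det_mul]
  simp only [mul_apply, Fin.sum_univ_two]
  ext i j; fin_cases i <;> fin_cases j <;> simp

theorem isUnit_det {A : Matrix (Fin 3) (Fin 3) ℤ_[p]} (hA : A ∈ AutSet p) : IsUnit A.det := by
  obtain ⟨α, v₁, v₂, hα, rfl⟩ := hA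
  convert hα.mul hα using 1
  simp [det_fin_three, det_fin_two]; ring

theorem hbr_vecMul {A : Matrix (Fin 3) (Fin 3) ℤ_[p]} (hA : A ∈ AutSet p) (u v : Fin 3 → ℤ_[p]) :
    hbr (u ᵥ* A) (v ᵥ* A) = hbr u v ᵥ* A := by
  obtain ⟨α, v₁, v₂, hα, rfl⟩ := hA
  funext i; fin_cases i <;> simp [hbr, vecMul, dotProduct, Fin.sum_univ_three, det_fin_two]; ring

end AutSet

def IsHeisenbergIdeal (S : Submodule ℤ_[p] (Fin 3 → ℤ_[p])) : Prop :=
  ∀ u v, v ∈ S → hbr u v ∈ S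

theorem IsHeisenbergIdeal.map_vecMulLinear {S : Submodule ℤ_[p] (Fin 3 → ℤ_[p])}
    (hS : IsHeisenbergIdeal S) {A : Matrix (Fin 3) (Fin 3) ℤ_[p]} (hA : A ∈ AutSet p) :
    IsHeisenbergIdeal (S.map A.vecMulLinear) := by
  rintro u _ ⟨v, hv, rfl⟩
  have hu : (u ᵥ* A⁻¹) ᵥ* A = u := by
    rw [vecMul_vecMul, nonsing_inv_mul _ (AutSet.isUnit_det hA), vecMul_one]
  refine ⟨hbr (u ᵥ* A⁻¹) v, hS _ _ hv, ?_⟩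
  rw [vecMulLinear_apply, vecMulLinear_apply, ← AutSet.hbr_vecMul hA, hu]

theorem exists_autSet_column_reduction (M : Matrix (Fin 3) (Fin 3) ℤ_[p]) :
    ∃ A ∈ AutSet p, ∃ i₀, (M * A) i₀ 0 = 0 ∧
      ∀ i, (M * A) i₀ 1 ∣ (M * A) i 0 ∧ (M * A) i₀ 1 ∣ (M * A) i 1 := by
  obtain ⟨⟨i₀, j₀⟩, hmin⟩ :=
    IsDiscreteValuationRing.exists_dvd_forall fun ij : Fin 3 × Fin 2 => M ij.1 ij.2.castSucc
  obtain ⟨α, hα, h₀, hx, hy⟩ := exists_isUnit_det_pair_reduction (M i₀ 0) (M i₀ 1)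
  set g := M i₀ 0 * α 0 1 + M i₀ 1 * α 1 1
  have hg : ∀ i, g ∣ M i 0 ∧ g ∣ M i 1 := fun i => by
    have hgmin : g ∣ M i₀ j₀.castSucc := by fin_cases j₀ <;> assumption
    exact ⟨hgmin.trans (hmin (i, 0)), hgmin.trans (hmin (i, 1))⟩
  refine ⟨!![α 0 0, α 0 1, 0; α 1 0, α 1 1, 0; 0, 0, α.det], ⟨α, 0, 0, hα, rfl⟩, i₀, ?_,
    fun i => ?_⟩
  · simpa [mul_apply, Fin.sum_univ_three] using h₀
  · have hg₀ := dvd_add ((hg i).1.mul_right (α 0 0)) ((hg i).2.mul_right (α 1 0))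
    have hg₁ := dvd_add ((hg i).1.mul_right (α 0 1)) ((hg i).2.mul_right (α 1 1))
    simpa [mul_apply, Fin.sum_univ_three] using ⟨hg₀, hg₁⟩

def DoubleCosetRel (M N : Matrix (Fin 3) (Fin 3) ℤ_[p]) : Prop :=
  ∃ γ A : Matrix (Fin 3) (Fin 3) ℤ_[p], IsUnit γ.det ∧ A ∈ AutSet p ∧ γ * M * A = N

namespace DoubleCosetRel

variable {M N L : Matrix (Fin 3) (Fin 3) ℤ_[p]}

theorem trans (h₁ : DoubleCosetRel M N) (h₂ : DoubleCosetRel N L) : DoubleCosetRel M L := by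
  obtain ⟨γ, A, hγ, hA, rfl⟩ := h₁
  obtain ⟨γ', A', hγ', hA', rfl⟩ := h₂
  refine ⟨γ' * γ, A * A', by rw [det_mul]; exact hγ'.mul hγ, AutSet.mul_mem hA hA', ?_⟩
  simp only [Matrix.mul_assoc]

theorem of_mul_eq {γ A : Matrix (Fin 3) (Fin 3) ℤ_[p]} (hγ : IsUnit γ.det) (hA : A ∈ AutSet p)
    (h : M * A = γ * N) : DoubleCosetRel M N :=
  ⟨γ⁻¹, A, isUnit_nonsing_inv_det γ hγ, hA, by
    rw [Matrix.mul_assoc, h, ← Matrix.mul_assoc, nonsing_inv_mul γ hγ, Matrix.one_mul]⟩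

end DoubleCosetRel

theorem exists_doubleCosetRel_triangular (M : Matrix (Fin 3) (Fin 3) ℤ_[p]) (hdet : M.det ≠ 0)
    (hM : IsHeisenbergIdeal (span ℤ_[p] (range M.row))) :
    ∃ d₁ c₁ d c₂ τ : ℤ_[p], d ∣ d₁ ∧ τ ∣ d ∧ d₁ * d * τ ≠ 0 ∧
      DoubleCosetRel M (triangular d₁ c₁ d c₂ τ) := by
  obtain ⟨A, hA, i₀, h₀, hdvd⟩ := exists_autSet_column_reduction M
  obtain ⟨d₁, c₁, τ, hspan⟩ :=
    exists_span_range_row_eq_triangular (M * A) h₀ fun i => (hdvd i).2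
  have hMA : (M * A).det ≠ 0 := by
    rw [det_mul]; exact mul_ne_zero hdet (AutSet.isUnit_det hA).ne_zero
  obtain ⟨γ, hγ, hγT⟩ := exists_isUnit_det_mul_eq_of_span_range_eq hMA hspan
  have hne : d₁ * (M * A) i₀ 1 * τ ≠ 0 := by
    rw [← triangular.det d₁ c₁ _ ((M * A) i₀ 2), ← hγT, det_mul]
    exact mul_ne_zero hγ.ne_zero hMA
  have hT : IsHeisenbergIdeal
      (span ℤ_[p] (range (triangular d₁ c₁ ((M * A) i₀ 1) ((M * A) i₀ 2) τ).row)) := by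
    rw [← hspan, span_range_row_mul]; exact hM.map_vecMulLinear hA
  refine ⟨d₁, c₁, (M * A) i₀ 1, (M * A) i₀ 2, τ, ?_, ?_, hne, γ, A, hγ, hA,
    by rw [Matrix.mul_assoc, hγT]⟩
  · refine dvd_apply_of_mem_span_range_row (j := 0) (fun i => (hdvd i).1) (v := ![d₁, 0, c₁]) ?_
    rw [hspan]
    exact subset_span ⟨0, by ext j; fin_cases j <;> rfl⟩
  · refine triangular.dvd_of_mem_span_range_row (c₁ := c₁) (c₂ := (M * A) i₀ 2)
      (left_ne_zero_of_mul (left_ne_zero_of_mul hne))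
      (right_ne_zero_of_mul (left_ne_zero_of_mul hne)) ?_
    convert hT ![1, 0, 0] _ (subset_span ⟨1, rfl⟩) using 1
    ext j; fin_cases j <;> simp [hbr, triangular]

section Moves

variable {d₁ c₁ d c₂ τ X : ℤ_[p]}

theorem doubleCosetRel_triangular_add_c₂ (hX : d * X = d₁) (s s' : ℤ_[p]) :
    DoubleCosetRel (triangular d₁ c₁ d c₂ τ) (triangular d₁ c₁ d (c₂ + s * c₁ + s' * τ) τ) := by
  refine DoubleCosetRel.of_mul_eq (γ := !![1, 0, 0; -s, 1, -s'; 0, 0, 1])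
    (A := !![1, 0, 0; -(s * X), 1, 0; 0, 0, 1]) (by simp [det_fin_three])
    ⟨!![1, 0; -(s * X), 1], 0, 0, by simp [det_fin_two], by simp [det_fin_two]⟩ ?_
  rw [triangular, triangular, mul_fin_three, mul_fin_three, ← hX]
  ext i j; fin_cases i <;> fin_cases j <;> simp <;> ring

theorem doubleCosetRel_triangular_add_c₁ (hX : d * X = d₁) (t t' : ℤ_[p]) :
    DoubleCosetRel (triangular d₁ c₁ d c₂ τ)
      (triangular d₁ (c₁ + t * (X * c₂) + t' * τ) d c₂ τ) := by
  refine DoubleCosetRel.of_mul_eq (γ := !![1, -(t * X), -t'; 0, 1, 0; 0, 0, 1])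
    (A := !![1, -t, 0; 0, 1, 0; 0, 0, 1]) (by simp [det_fin_three])
    ⟨!![1, -t; 0, 1], 0, 0, by simp [det_fin_two], by simp [det_fin_two]⟩ ?_
  rw [triangular, triangular, mul_fin_three, mul_fin_three, ← hX]
  ext i j; fin_cases i <;> fin_cases j <;> simp <;> ring

theorem doubleCosetRel_triangular_units (u₁ v₁ u₂ v₂ u₃ : ℤ_[p]ˣ) (x₁ y₁ x₂ y₂ x₃ : ℤ_[p]) :
    DoubleCosetRel (triangular (u₁ * x₁ : ℤ_[p]) (v₁ * y₁) (u₂ * x₂) (v₂ * y₂) (u₃ * x₃))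
      (triangular x₁ y₁ x₂ y₂ x₃) := by
  set ε₁ := u₂ * v₂⁻¹
  set ε₂ := u₁ * v₁⁻¹
  refine DoubleCosetRel.of_mul_eq (γ := diagonal ![(u₁ * ε₁ : ℤ_[p]), u₂ * ε₂, u₃ * ε₁ * ε₂])
    (A := !![(ε₁ : ℤ_[p]), 0, 0; 0, ε₂, 0; 0, 0, ε₁ * ε₂])
    (by simp [det_diagonal, Fin.prod_univ_three])
    ⟨!![(ε₁ : ℤ_[p]), 0; 0, ε₂], 0, 0, by simp [det_fin_two], by simp [det_fin_two]⟩ ?_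
  have h₁ : (v₁ : ℤ_[p]) * ↑v₁⁻¹ = 1 := v₁.mul_inv
  have h₂ : (v₂ : ℤ_[p]) * ↑v₂⁻¹ = 1 := v₂.mul_inv
  rw [triangular, triangular, mul_fin_three]
  ext i j; fin_cases i <;> fin_cases j <;> simp [ε₁, ε₂] <;> grind

theorem doubleCosetRel_triangular_pow_valuation {x₁ y₁ x₂ y₂ x₃ : ℤ_[p]} (hx₁ : x₁ ≠ 0)
    (hy₁ : y₁ ≠ 0) (hx₂ : x₂ ≠ 0) (hy₂ : y₂ ≠ 0) (hx₃ : x₃ ≠ 0) :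
    DoubleCosetRel (triangular x₁ y₁ x₂ y₂ x₃)
      (triangular ((p : ℤ_[p]) ^ x₁.valuation) (p ^ y₁.valuation) (p ^ x₂.valuation)
        (p ^ y₂.valuation) (p ^ x₃.valuation)) := by
  have h := doubleCosetRel_triangular_units (PadicInt.unitCoeff hx₁) (PadicInt.unitCoeff hy₁)
    (PadicInt.unitCoeff hx₂) (PadicInt.unitCoeff hy₂) (PadicInt.unitCoeff hx₃)
    (p ^ x₁.valuation) (p ^ y₁.valuation) (p ^ x₂.valuation) (p ^ y₂.valuation) (p ^ x₃.valuation)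
  rwa [← PadicInt.unitCoeff_spec hx₁, ← PadicInt.unitCoeff_spec hy₁, ← PadicInt.unitCoeff_spec hx₂,
    ← PadicInt.unitCoeff_spec hy₂, ← PadicInt.unitCoeff_spec hx₃] at h

end Moves

theorem exists_normalForm_of_triangular {d₁ c₁ d c₂ τ : ℤ_[p]} (hd : d ∣ d₁) (hτ : τ ∣ d)
    (hne : d₁ * d * τ ≠ 0) :
    ∃ e₁ e₂ e₃ e₄ e₅ : ℕ, e₄ ≤ e₃ ∧ e₅ ≤ e₃ ∧ e₅ ≤ e₄ ∧ e₄ ≤ e₅ + e₁ ∧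
      DoubleCosetRel (triangular d₁ c₁ d c₂ τ) (triangular ((p : ℤ_[p]) ^ (e₁ + e₂ + e₃))
        (p ^ e₄) (p ^ (e₂ + e₃)) (p ^ e₅) (p ^ e₃)) := by
  obtain ⟨X, rfl⟩ := hd
  have hτ₀ : τ ≠ 0 := right_ne_zero_of_mul hne
  have hd₀ : d ≠ 0 := right_ne_zero_of_mul (left_ne_zero_of_mul hne)
  have hdX : d * X ≠ 0 := left_ne_zero_of_mul (left_ne_zero_of_mul hne)
  have hX₀ : X ≠ 0 := right_ne_zero_of_mul hdX
  obtain ⟨s, s', t, t', C₁, C₂, hC₂, hC₁, hC₁τ, hC₂τ, hC₂C₁, hC₁X⟩ :=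
    exists_reduced_corner X τ c₁ c₂
  have hC₁₀ : C₁ ≠ 0 := ne_zero_of_dvd_ne_zero hτ₀ hC₁τ
  have hC₂₀ : C₂ ≠ 0 := ne_zero_of_dvd_ne_zero hτ₀ hC₂τ
  have hτd := PadicInt.valuation_le_of_dvd hd₀ hτ
  refine ⟨X.valuation, d.valuation - τ.valuation, τ.valuation, C₁.valuation, C₂.valuation,
    PadicInt.valuation_le_of_dvd hτ₀ hC₁τ, PadicInt.valuation_le_of_dvd hτ₀ hC₂τ,
    PadicInt.valuation_le_of_dvd hC₁₀ hC₂C₁, ?_, ?_⟩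
  · have := PadicInt.valuation_le_of_dvd (mul_ne_zero hX₀ hC₂₀) hC₁X
    rw [PadicInt.valuation_mul hX₀ hC₂₀] at this; omega
  · rw [show X.valuation + (d.valuation - τ.valuation) + τ.valuation = (d * X).valuation by
      rw [PadicInt.valuation_mul hd₀ hX₀]; omega, Nat.sub_add_cancel hτd]
    have hnormal := doubleCosetRel_triangular_pow_valuation hdX hC₁₀ hd₀ hC₂₀ hτ₀
    subst hC₁ hC₂
    exact ((doubleCosetRel_triangular_add_c₂ rfl s s').trans
      (doubleCosetRel_triangular_add_c₁ rfl t t')).trans hnormal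

end Heisenberg

/-- every double coset G·M·A, where M spans an ideal of finite
index of the Heisenberg Lie algebra, contains a matrix in the normal form
with diagonal (p^{e1+e2+e3}, p^{e2+e3}, p^{e3}), (1,2)-entry 0, (1,3)-entry
p^{e4}, (2,3)-entry p^{e5}, where e4 ≤ e3, e5 ≤ e3, e5 ≤ e4 ≤ e5 + e1. -/
theorem stmt_10 (p : ℕ) [Fact p.Prime] (M : Matrix (Fin 3) (Fin 3) ℤ_[p])
    (hdet : M.det ≠ 0)
    (hideal : ∀ u v : Fin 3 → ℤ_[p],
        v ∈ Submodule.span ℤ_[p] (Set.range fun i => M i) →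
        hbr u v ∈ Submodule.span ℤ_[p] (Set.range fun i => M i)) :
    ∃ e1 e2 e3 e4 e5 : ℕ, e4 ≤ e3 ∧ e5 ≤ e3 ∧ e5 ≤ e4 ∧ e4 ≤ e5 + e1 ∧
      ∃ γ a : Matrix (Fin 3) (Fin 3) ℤ_[p], IsUnit γ.det ∧ a ∈ AutSet p ∧
        γ * M * a = !![(p : ℤ_[p]) ^ (e1 + e2 + e3), 0, (p : ℤ_[p]) ^ e4;
                       0, (p : ℤ_[p]) ^ (e2 + e3), (p : ℤ_[p]) ^ e5;
                       0, 0, (p : ℤ_[p]) ^ e3] := by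
  obtain ⟨d₁, c₁, d, c₂, τ, hd, hτ, hne, hM⟩ := exists_doubleCosetRel_triangular M hdet hideal
  obtain ⟨e1, e2, e3, e4, e5, h₁, h₂, h₃, h₄, hN⟩ :=
    exists_normalForm_of_triangular (c₁ := c₁) (c₂ := c₂) hd hτ hne
  obtain ⟨γ, a, hγ, ha, h⟩ := hM.trans hN
  exact ⟨e1, e2, e3, e4, e5, h₁, h₂, h₃, h₄, γ, a, hγ, ha, h⟩
end

section
/- The number of pairs of subgroup-index data: for each k ≥ 0, the number of 5-tuples (e1,...,e5) ∈ ℕ_0^5 satisfying e4 ≤ e3, e5 ≤ e3, e5 ≤ e4 ≤ e5 + e1, and e1 + 2e2 + 3e3 = k, equals the number of 5-tuples (f1,...,f5) ∈ ℕ_0^5 with f1 + 2f2 + 3f3 + 3f4 + 4f5 = k. -/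
/-- for each k, the number of 5-tuples (e1,...,e5) with e4 ≤ e3,
e5 ≤ e3, e5 ≤ e4 ≤ e5 + e1 and e1 + 2e2 + 3e3 = k equals the number of
5-tuples (f1,...,f5) with f1 + 2f2 + 3f3 + 3f4 + 4f5 = k.
(Here e 0, ..., e 4 stand for e1, ..., e5.) -/
theorem stmt_18 (k : ℕ) :
    Nat.card {e : Fin 5 → ℕ // e 3 ≤ e 2 ∧ e 4 ≤ e 2 ∧ e 4 ≤ e 3 ∧
        e 3 ≤ e 4 + e 0 ∧ e 0 + 2 * e 1 + 3 * e 2 = k}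
    = Nat.card {f : Fin 5 → ℕ //
        f 0 + 2 * f 1 + 3 * f 2 + 3 * f 3 + 4 * f 4 = k} := by
  apply Nat.card_congr
  refine ⟨fun ⟨e, he⟩ => ⟨![e 0 + e 4 - e 3, e 1, e 2 - e 3, e 4, e 3 - e 4], by
      simp only [Matrix.cons_val_zero, Matrix.cons_val_one, Matrix.head_cons,
        Matrix.cons_val_two, Matrix.tail_cons, Matrix.cons_val_three,
        Matrix.cons_val_four]
      omega⟩,
    fun ⟨f, hf⟩ => ⟨![f 0 + f 4, f 1, f 2 + f 3 + f 4, f 3 + f 4, f 3], by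
      simp only [Matrix.cons_val_zero, Matrix.cons_val_one, Matrix.head_cons,
        Matrix.cons_val_two, Matrix.tail_cons, Matrix.cons_val_three,
        Matrix.cons_val_four]
      omega⟩, ?_, ?_⟩
  · rintro ⟨e, he⟩
    ext i
    fin_cases i <;> simp <;> omega
  · rintro ⟨f, hf⟩
    ext i
    fin_cases i <;> simp <;> omega
end
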